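/- For every n ∈ ℕ (n ≥ 0) and every (ξ,η) ∈ E, the successive approximation differences satisfy |ΔG_n(ξ,η)| ≤ (M^{n+2}/(n+1)!)·(ξ+η)^{n+1}, where M := (f̄ + Λ̄)/2. -/

import Mathlib

/-!
After replacing `c1` and `f` by continuous extensions (Tietze), every `G_n` is continuous, so `Φ`
is linear along the iteration and `ΔG_n = Φ^{n+1} G₀`. The replacement changes no `G_n` on `E`:
the integrals defining `G₀` and `Φ_H(ξ,η)` only sample `c1` and `f` on `[0,1]` and `H` on `E`.

The integration regions of `Φ_H(ξ,η)` keep `τ + s ≤ ξ + η`, so `|H| ≤ A (τ+s)^k` on `E` gives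
`|Φ_H| ≤ M A (ξ+η)^{k+1}/(k+1)`, the weights of the four terms adding up to at most `M` because
`ξ + η ≤ 2` and `η ≤ 1`. Starting from `|G₀| ≤ M`, induction gives
`|Φ^n G₀| ≤ M^{n+1}/n! (ξ+η)^n`.
-/

open MeasureTheory Set
open scoped ENNReal

noncomputable section

/-- The triangular domain `D = {(x,y) : 0 ≤ y ≤ x ≤ 1}`. -/
def Dset : Set (ℝ × ℝ) := {p : ℝ × ℝ | 0 ≤ p.2 ∧ p.2 ≤ p.1 ∧ p.1 ≤ 1}

/-- Partial derivative in the first variable (within `D`). -/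
def pd1 (K : ℝ × ℝ → ℝ) (p : ℝ × ℝ) : ℝ := fderivWithin ℝ K Dset p (1, 0)

/-- Partial derivative in the second variable (within `D`). -/
def pd2 (K : ℝ × ℝ → ℝ) (p : ℝ × ℝ) : ℝ := fderivWithin ℝ K Dset p (0, 1)

/-- `K` is a `C²` solution of the kernel equation on `D`:
(i) `k_xx - k_yy = μ k + f + ∫_y^x k(x,z) f(z,y) dz` on `D`;
(ii) `k_x(x,x) + k_y(x,x) = λ0/2`; (iii) `k_y(x,0) = 0`; (iv) `k(0,0) = 0`. -/
def IsKernelSol (lam0 : ℝ) (c1 : ℝ → ℝ) (f : ℝ → ℝ → ℝ) (K : ℝ × ℝ → ℝ) : Prop :=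
  ContDiffOn ℝ 2 K Dset ∧
  (∀ p ∈ Dset, pd1 (pd1 K) p - pd2 (pd2 K) p =
      (lam0 - c1 p.1 + c1 p.2) * K p + f p.1 p.2 + ∫ z in p.2..p.1, K (p.1, z) * f z p.2) ∧
  (∀ x ∈ Icc (0:ℝ) 1, pd1 K (x, x) + pd2 K (x, x) = lam0 / 2) ∧
  (∀ x ∈ Icc (0:ℝ) 1, pd2 K (x, 0) = 0) ∧
  K (0, 0) = 0

/-- `f̄ := max_{[0,1]²} |f|`. -/
def fbar (f : ℝ → ℝ → ℝ) : ℝ :=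
  sSup ((fun p : ℝ × ℝ => |f p.1 p.2|) '' (Icc (0:ℝ) 1 ×ˢ Icc (0:ℝ) 1))

/-- `Λ̄ := max {λ0, max_D |λ0 - c1(x) + c1(y)|}`. -/
def Lambdabar (lam0 : ℝ) (c1 : ℝ → ℝ) : ℝ :=
  max lam0 (sSup ((fun p : ℝ × ℝ => |lam0 - c1 p.1 + c1 p.2|) '' Dset))

/-- `M := (f̄ + Λ̄)/2`. -/
def Mconst (lam0 : ℝ) (c1 : ℝ → ℝ) (f : ℝ → ℝ → ℝ) : ℝ :=
  (fbar f + Lambdabar lam0 c1) / 2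

/-- The transformed domain `E = {(ξ,η) : 0 ≤ η ≤ 1, η ≤ ξ ≤ 2 - η}`. -/
def Eset : Set (ℝ × ℝ) := {p : ℝ × ℝ | 0 ≤ p.2 ∧ p.2 ≤ 1 ∧ p.2 ≤ p.1 ∧ p.1 ≤ 2 - p.2}

/-- `μ̃(ξ,η) := λ0 - c1((ξ+η)/2) + c1((ξ-η)/2)`. -/
def mutld (lam0 : ℝ) (c1 : ℝ → ℝ) (xi eta : ℝ) : ℝ :=
  lam0 - c1 ((xi + eta) / 2) + c1 ((xi - eta) / 2)

/-- The inhomogeneous term `G0` of the integral equation. -/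
def Gzero (lam0 : ℝ) (f : ℝ → ℝ → ℝ) (xi eta : ℝ) : ℝ :=
  lam0 / 4 * (xi + eta)
    + (1 / 4) * (∫ tau in eta..xi, ∫ s in (0:ℝ)..eta, f ((tau + s) / 2) ((tau - s) / 2))
    + (1 / 2) * (∫ tau in (0:ℝ)..eta, ∫ s in (0:ℝ)..tau, f ((tau + s) / 2) ((tau - s) / 2))

/-- The integral operator `Φ_H`. -/
def Phi (lam0 : ℝ) (c1 : ℝ → ℝ) (f : ℝ → ℝ → ℝ) (H : ℝ → ℝ → ℝ) (xi eta : ℝ) : ℝ :=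
  (1 / 4) * (∫ tau in eta..xi, ∫ s in (0:ℝ)..eta, mutld lam0 c1 tau s * H tau s)
    + (1 / 2) * (∫ tau in (0:ℝ)..eta, ∫ s in (0:ℝ)..tau, mutld lam0 c1 tau s * H tau s)
    + (1 / 4) * (∫ z in eta..xi, ∫ s in (0:ℝ)..eta, ∫ tau in z..(z + eta - s),
        f ((tau - s) / 2) (z - (tau + s) / 2) * H tau s)
    + (1 / 2) * (∫ z in (0:ℝ)..eta, ∫ s in (0:ℝ)..z, ∫ tau in z..(2 * z - s),
        f ((tau - s) / 2) (z - (tau + s) / 2) * H tau s)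

/-- The successive approximations `G_0 := G0`, `G_{n+1} := G0 + Φ_{G_n}`. -/
def Gseq (lam0 : ℝ) (c1 : ℝ → ℝ) (f : ℝ → ℝ → ℝ) : ℕ → ℝ → ℝ → ℝ
  | 0 => Gzero lam0 f
  | n + 1 => fun xi eta => Gzero lam0 f xi eta + Phi lam0 c1 f (Gseq lam0 c1 f n) xi eta

namespace intervalIntegral

@[fun_prop]
lemma continuous_parametric_intervalIntegral_of_continuous_bounds {X : Type*}
    [TopologicalSpace X] [FirstCountableTopology X] [LocallyCompactSpace X]
    {F : X → ℝ → ℝ} (hF : Continuous (Function.uncurry F))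
    {a b : X → ℝ} (ha : Continuous a) (hb : Continuous b) :
    Continuous fun x => ∫ t in a x..b x, F x t := by
  have hsplit : ∀ x, ∫ t in a x..b x, F x t
      = (∫ t in (0:ℝ)..b x, F x t) - ∫ t in (0:ℝ)..a x, F x t := fun x =>
    (integral_interval_sub_left ((hF.uncurry_left x).intervalIntegrable _ _)
      ((hF.uncurry_left x).intervalIntegrable _ _)).symm
  simp_rw [hsplit]
  fun_prop

lemma integral_sub_of_continuous {F G : ℝ → ℝ} (hF : Continuous F) (hG : Continuous G)
    (a b : ℝ) : ∫ t in a..b, (F t - G t) = (∫ t in a..b, F t) - ∫ t in a..b, G t :=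
  integral_sub (hF.intervalIntegrable a b) (hG.intervalIntegrable a b)

lemma integral_congr_Icc {F G : ℝ → ℝ} {a b : ℝ} (hab : a ≤ b)
    (h : ∀ t ∈ Icc a b, F t = G t) : ∫ t in a..b, F t = ∫ t in a..b, G t :=
  integral_congr (by rwa [uIcc_of_le hab])

lemma abs_integral_le_of_abs_le_const {g : ℝ → ℝ} {a b C : ℝ} (hab : a ≤ b)
    (h : ∀ t ∈ Icc a b, |g t| ≤ C) : |∫ t in a..b, g t| ≤ C * (b - a) := by
  have := norm_integral_le_of_norm_le_const (f := g) fun t ht =>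
    h t (uIcc_of_le hab ▸ uIoc_subset_uIcc ht)
  rwa [Real.norm_eq_abs, abs_of_nonneg (sub_nonneg.2 hab)] at this

lemma abs_integral_le_of_abs_le_pow {g : ℝ → ℝ} {a b c u C : ℝ} {k : ℕ} (hab : a ≤ b)
    (hac : 0 ≤ a + c) (hbu : b + c ≤ u) (hC : 0 ≤ C)
    (h : ∀ t ∈ Icc a b, |g t| ≤ C * (t + c) ^ k) :
    |∫ t in a..b, g t| ≤ C * (u ^ (k + 1) / (k + 1)) := by
  have hpow : (a + c) ^ (k + 1) ≤ (b + c) ^ (k + 1) := by gcongr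
  calc |∫ t in a..b, g t| ≤ |∫ t in a..b, C * (t + c) ^ k| := by
        simpa only [Real.norm_eq_abs] using norm_integral_le_abs_of_norm_le
          ((ae_restrict_mem measurableSet_uIoc).mono fun t ht =>
            (Real.norm_eq_abs (g t)).trans_le (h t (uIcc_of_le hab ▸ uIoc_subset_uIcc ht)))
          ((by fun_prop : Continuous fun t => C * (t + c) ^ k).intervalIntegrable a b)
    _ = C * (((b + c) ^ (k + 1) - (a + c) ^ (k + 1)) / (k + 1)) := by
        rw [integral_const_mul, integral_comp_add_right (· ^ k), integral_pow,
          abs_of_nonneg]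
        have := sub_nonneg.2 hpow
        positivity
    _ ≤ C * (u ^ (k + 1) / (k + 1)) := by
        gcongr
        linarith [pow_nonneg hac (k + 1), pow_le_pow_left₀ (hac.trans (by linarith)) hbu (k + 1)]

end intervalIntegral

open intervalIntegral

lemma ContinuousOn.exists_continuous_eqOn {X : Type*} [TopologicalSpace X] [NormalSpace X]
    {s : Set X} (hs : IsClosed s) {g : X → ℝ} (hg : ContinuousOn g s) :
    ∃ g' : X → ℝ, Continuous g' ∧ EqOn g' g s := by
  obtain ⟨G, hG⟩ := ContinuousMap.exists_restrict_eq hs ⟨_, hg.domRestrict⟩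
  exact ⟨G, G.continuous, fun x hx => congr($hG ⟨x, hx⟩)⟩

lemma mem_Eset_iff {τ s : ℝ} : (τ, s) ∈ Eset ↔ 0 ≤ s ∧ s ≤ τ ∧ τ + s ≤ 2 := by
  change 0 ≤ s ∧ s ≤ 1 ∧ s ≤ τ ∧ τ ≤ 2 - s ↔ _
  constructor
  · rintro ⟨h0, -, h2, h3⟩
    exact ⟨h0, h2, by linarith⟩
  · rintro ⟨h0, h2, h3⟩
    exact ⟨h0, by linarith, h2, by linarith⟩

lemma mem_Eset_of_mem_rect {ξ η τ s : ℝ} (hp : (ξ, η) ∈ Eset) (hτ : τ ∈ Icc η ξ)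
    (hs : s ∈ Icc 0 η) : (τ, s) ∈ Eset := by
  obtain ⟨-, -, h3⟩ := mem_Eset_iff.1 hp
  exact mem_Eset_iff.2 ⟨hs.1, by linarith [hs.2, hτ.1], by linarith [hs.2, hτ.2]⟩

lemma mem_Eset_of_mem_triangle {ξ η τ s : ℝ} (hp : (ξ, η) ∈ Eset) (hτ : τ ∈ Icc 0 η)
    (hs : s ∈ Icc 0 τ) : (τ, s) ∈ Eset := by
  obtain ⟨-, h2, h3⟩ := mem_Eset_iff.1 hp
  exact mem_Eset_iff.2 ⟨hs.1, hs.2, by linarith [hs.2, hτ.2]⟩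

lemma mem_Dset_of_mem_Eset {τ s : ℝ} (hp : (τ, s) ∈ Eset) :
    ((τ + s) / 2, (τ - s) / 2) ∈ Dset := by
  obtain ⟨h0, h2, h3⟩ := mem_Eset_iff.1 hp
  exact ⟨by simp only; linarith, by simp only; linarith, by simp only; linarith⟩

lemma Dset_subset_Icc_prod_Icc : Dset ⊆ Icc 0 1 ×ˢ Icc 0 1 := by
  rintro ⟨x, y⟩ ⟨h0, h1, h2⟩
  exact ⟨⟨h0.trans h1, h2⟩, h0, h1.trans h2⟩

lemma half_add_half_sub_mem_Icc {τ s : ℝ} (hp : (τ, s) ∈ Eset) :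
    (τ + s) / 2 ∈ Icc (0:ℝ) 1 ∧ (τ - s) / 2 ∈ Icc (0:ℝ) 1 :=
  Dset_subset_Icc_prod_Icc (mem_Dset_of_mem_Eset hp)

lemma kernel_args_mem_Icc {τ s z : ℝ} (hp : (τ, s) ∈ Eset) (hz : τ + s ≤ 2 * z)
    (hzτ : z ≤ τ) : (τ - s) / 2 ∈ Icc (0:ℝ) 1 ∧ z - (τ + s) / 2 ∈ Icc (0:ℝ) 1 := by
  obtain ⟨h0, h2, h3⟩ := mem_Eset_iff.1 hp
  exact ⟨⟨by linarith, by linarith⟩, by linarith, by linarith⟩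

lemma isCompact_Dset : IsCompact Dset :=
  (isCompact_Icc.prod isCompact_Icc).of_isClosed_subset
    ((isClosed_le continuous_const continuous_snd).inter
      ((isClosed_le continuous_snd continuous_fst).inter
        (isClosed_le continuous_fst continuous_const))) Dset_subset_Icc_prod_Icc

lemma abs_le_fbar {f : ℝ → ℝ → ℝ}
    (hf : ContinuousOn (fun p : ℝ × ℝ => f p.1 p.2) (Icc 0 1 ×ˢ Icc 0 1))
    {x y : ℝ} (hx : x ∈ Icc (0:ℝ) 1) (hy : y ∈ Icc (0:ℝ) 1) : |f x y| ≤ fbar f :=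
  le_csSup ((isCompact_Icc.prod isCompact_Icc).bddAbove_image hf.abs) ⟨(x, y), ⟨hx, hy⟩, rfl⟩

lemma abs_le_Lambdabar (lam0 : ℝ) {c1 : ℝ → ℝ} (hc1 : ContinuousOn c1 (Icc 0 1)) {x y : ℝ}
    (hp : (x, y) ∈ Dset) : |lam0 - c1 x + c1 y| ≤ Lambdabar lam0 c1 := by
  have hcont : ContinuousOn (fun p : ℝ × ℝ => |lam0 - c1 p.1 + c1 p.2|) Dset :=
    ((continuousOn_const.sub (hc1.comp continuous_fst.continuousOn
      fun _ hp => (Dset_subset_Icc_prod_Icc hp).1)).add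
      (hc1.comp continuous_snd.continuousOn fun _ hp => (Dset_subset_Icc_prod_Icc hp).2)).abs
  exact (le_csSup (isCompact_Dset.bddAbove_image hcont) ⟨(x, y), hp, rfl⟩).trans
    (le_max_right _ _)

section Continuity

variable (lam0 : ℝ) {c : ℝ → ℝ} {f : ℝ → ℝ → ℝ}

lemma continuous_Gzero (hf : Continuous (Function.uncurry f)) :
    Continuous (Function.uncurry (Gzero lam0 f)) := by
  unfold Gzero Function.uncurry
  fun_prop

lemma continuous_Phi (hc : Continuous c) (hf : Continuous (Function.uncurry f))
    {H : ℝ → ℝ → ℝ} (hH : Continuous (Function.uncurry H)) :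
    Continuous (Function.uncurry (Phi lam0 c f H)) := by
  unfold Phi mutld Function.uncurry
  fun_prop

lemma continuous_Gseq (hc : Continuous c) (hf : Continuous (Function.uncurry f)) (n : ℕ) :
    Continuous (Function.uncurry (Gseq lam0 c f n)) := by
  induction n with
  | zero => exact continuous_Gzero lam0 hf
  | succ n ih => exact (continuous_Gzero lam0 hf).add (continuous_Phi lam0 hc hf ih)

lemma Phi_sub (hc : Continuous c) (hf : Continuous (Function.uncurry f))
    {H₁ H₂ : ℝ → ℝ → ℝ} (hH₁ : Continuous (Function.uncurry H₁))
    (hH₂ : Continuous (Function.uncurry H₂)) (ξ η : ℝ) :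
    Phi lam0 c f (fun a b => H₁ a b - H₂ a b) ξ η
      = Phi lam0 c f H₁ ξ η - Phi lam0 c f H₂ ξ η := by
  simp only [Phi, mutld, mul_sub]
  -- at the reducible transparency of `simp`, `fun_prop` cannot unfold `Function.uncurry`
  simp (disch := with_unfolding_all fun_prop) only [integral_sub_of_continuous]
  ring

lemma Gseq_succ_sub (hc : Continuous c) (hf : Continuous (Function.uncurry f)) (n : ℕ)
    (ξ η : ℝ) :
    Gseq lam0 c f (n + 1) ξ η - Gseq lam0 c f n ξ η
      = (Phi lam0 c f)^[n + 1] (Gzero lam0 f) ξ η := by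
  induction n generalizing ξ η with
  | zero =>
    simp only [Gseq, zero_add, Function.iterate_one]
    ring
  | succ n ih =>
    have hΔ : (fun a b => Gseq lam0 c f (n + 1) a b - Gseq lam0 c f n a b)
        = (Phi lam0 c f)^[n + 1] (Gzero lam0 f) := funext₂ ih
    rw [Function.iterate_succ_apply', ← hΔ,
      Phi_sub lam0 hc hf (continuous_Gseq lam0 hc hf _) (continuous_Gseq lam0 hc hf _)]
    simp only [Gseq]
    ring

end Continuity

section Congr

variable (lam0 : ℝ) {c c' : ℝ → ℝ} {f f' : ℝ → ℝ → ℝ}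

lemma mutld_congr (hc : EqOn c c' (Icc 0 1)) {τ s : ℝ} (hp : (τ, s) ∈ Eset) :
    mutld lam0 c τ s = mutld lam0 c' τ s := by
  obtain ⟨hx, hy⟩ := half_add_half_sub_mem_Icc hp
  simp only [mutld, hc hx, hc hy]

lemma Gzero_congr (hf : ∀ x ∈ Icc (0:ℝ) 1, ∀ y ∈ Icc (0:ℝ) 1, f x y = f' x y) {τ s : ℝ}
    (hp : (τ, s) ∈ Eset) : Gzero lam0 f τ s = Gzero lam0 f' τ s := by
  have hf' : ∀ w r, (w, r) ∈ Eset →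
      f ((w + r) / 2) ((w - r) / 2) = f' ((w + r) / 2) ((w - r) / 2) := fun w r hwr =>
    hf _ (half_add_half_sub_mem_Icc hwr).1 _ (half_add_half_sub_mem_Icc hwr).2
  obtain ⟨h0, h2, -⟩ := mem_Eset_iff.1 hp
  simp only [Gzero]
  rw [integral_congr_Icc h2 fun w hw => integral_congr_Icc h0 fun r hr =>
      hf' w r (mem_Eset_of_mem_rect hp hw hr),
    integral_congr_Icc h0 fun w hw => integral_congr_Icc hw.1 fun r hr =>
      hf' w r (mem_Eset_of_mem_triangle hp hw hr)]

lemma Phi_congr (hc : EqOn c c' (Icc 0 1))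
    (hf : ∀ x ∈ Icc (0:ℝ) 1, ∀ y ∈ Icc (0:ℝ) 1, f x y = f' x y) {H H' : ℝ → ℝ → ℝ}
    (hH : ∀ τ s, (τ, s) ∈ Eset → H τ s = H' τ s) {ξ η : ℝ} (hp : (ξ, η) ∈ Eset) :
    Phi lam0 c f H ξ η = Phi lam0 c' f' H' ξ η := by
  have hμH : ∀ τ s, (τ, s) ∈ Eset →
      mutld lam0 c τ s * H τ s = mutld lam0 c' τ s * H' τ s := fun τ s hτs => by
    rw [mutld_congr lam0 hc hτs, hH τ s hτs]
  have hfH : ∀ z τ s, (τ, s) ∈ Eset → τ + s ≤ 2 * z → z ≤ τ →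
      f ((τ - s) / 2) (z - (τ + s) / 2) * H τ s
        = f' ((τ - s) / 2) (z - (τ + s) / 2) * H' τ s := fun z τ s hτs hz hzτ => by
    obtain ⟨hx, hy⟩ := kernel_args_mem_Icc hτs hz hzτ
    rw [hf _ hx _ hy, hH τ s hτs]
  obtain ⟨h0, h2, h3⟩ := mem_Eset_iff.1 hp
  simp only [Phi]
  refine congrArg₂ (· + ·) (congrArg₂ (· + ·) (congrArg₂ (· + ·) (congrArg _ ?_)
    (congrArg _ ?_)) (congrArg _ ?_)) (congrArg _ ?_)
  · exact integral_congr_Icc h2 fun τ hτ => integral_congr_Icc h0 fun s hs =>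
      hμH τ s (mem_Eset_of_mem_rect hp hτ hs)
  · exact integral_congr_Icc h0 fun τ hτ => integral_congr_Icc hτ.1 fun s hs =>
      hμH τ s (mem_Eset_of_mem_triangle hp hτ hs)
  · refine integral_congr_Icc h2 fun z hz => integral_congr_Icc h0 fun s hs =>
      integral_congr_Icc (by linarith [hs.2]) fun τ hτ => hfH z τ s ?_ ?_ hτ.1
    · exact mem_Eset_iff.2 ⟨hs.1, by linarith [hz.1, hs.2, hτ.1], by linarith [hz.2, hτ.2]⟩
    · linarith [hz.1, hτ.2]
  · refine integral_congr_Icc h0 fun z hz => integral_congr_Icc hz.1 fun s hs =>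
      integral_congr_Icc (by linarith [hs.2]) fun τ hτ => hfH z τ s ?_ ?_ hτ.1
    · exact mem_Eset_iff.2 ⟨hs.1, by linarith [hs.2, hτ.1], by linarith [hz.2, hτ.2]⟩
    · linarith [hτ.2]

lemma Gseq_congr (hc : EqOn c c' (Icc 0 1))
    (hf : ∀ x ∈ Icc (0:ℝ) 1, ∀ y ∈ Icc (0:ℝ) 1, f x y = f' x y) (n : ℕ) {ξ η : ℝ}
    (hp : (ξ, η) ∈ Eset) : Gseq lam0 c f n ξ η = Gseq lam0 c' f' n ξ η := by
  induction n generalizing ξ η with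
  | zero => exact Gzero_congr lam0 hf hp
  | succ n ih =>
    simp only [Gseq]
    rw [Gzero_congr lam0 hf hp, Phi_congr lam0 hc hf (fun τ s hτs => ih hτs) hp]

end Congr

lemma Phi_weights_le {ξ η L F B : ℝ} (hp : (ξ, η) ∈ Eset) (hL : 0 ≤ L) (hF : 0 ≤ F)
    (hB : 0 ≤ B) :
    L * B * (ξ - η) / 4 + L * B * η / 2 + F * B * η * (ξ - η) / 4 + F * B * η * η / 2
      ≤ (F + L) / 2 * B := by
  obtain ⟨h0, h1, h2, h3⟩ : 0 ≤ η ∧ η ≤ 1 ∧ η ≤ ξ ∧ ξ ≤ 2 - η := hp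
  have hu : ξ + η ≤ 2 := by linarith
  have hηu : η * (ξ + η) ≤ 2 := by nlinarith
  calc _ = B * (L * (ξ + η) + F * (η * (ξ + η))) / 4 := by ring
    _ ≤ B * (L * 2 + F * 2) / 4 := by gcongr
    _ = (F + L) / 2 * B := by ring

section Bounds

variable (lam0 : ℝ) {c : ℝ → ℝ} {f : ℝ → ℝ → ℝ} {L F : ℝ}

lemma abs_Gzero_le (hL : |lam0| ≤ L) (hF : 0 ≤ F)
    (hf : ∀ x ∈ Icc (0:ℝ) 1, ∀ y ∈ Icc (0:ℝ) 1, |f x y| ≤ F) {τ s : ℝ}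
    (hp : (τ, s) ∈ Eset) : |Gzero lam0 f τ s| ≤ (F + L) / 2 := by
  have hf' : ∀ w r, (w, r) ∈ Eset → |f ((w + r) / 2) ((w - r) / 2)| ≤ F := fun w r hwr =>
    hf _ (half_add_half_sub_mem_Icc hwr).1 _ (half_add_half_sub_mem_Icc hwr).2
  obtain ⟨h0, h2, h3⟩ := mem_Eset_iff.1 hp
  have hI := abs_integral_le_of_abs_le_const h2 fun w hw =>
    abs_integral_le_of_abs_le_const h0 fun r hr => hf' w r (mem_Eset_of_mem_rect hp hw hr)
  have hJ := abs_integral_le_of_abs_le_const h0 fun w hw =>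
    (abs_integral_le_of_abs_le_const hw.1 fun r hr =>
      hf' w r (mem_Eset_of_mem_triangle hp hw hr)).trans
      (mul_le_mul_of_nonneg_left (by linarith [hw.2]) hF : F * (w - 0) ≤ F * s)
  have hlam : |lam0 / 4 * (τ + s)| ≤ L / 4 * (τ + s) := by
    have hu : 0 ≤ τ + s := by linarith
    rw [abs_mul, abs_div, abs_of_nonneg hu, abs_of_pos (four_pos : (0:ℝ) < 4)]
    gcongr
  have hL0 : 0 ≤ L := (abs_nonneg _).trans hL
  have hs1 : s ≤ 1 := by linarith
  rw [Gzero, abs_le]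
  obtain ⟨hI₁, hI₂⟩ := abs_le.1 hI
  obtain ⟨hJ₁, hJ₂⟩ := abs_le.1 hJ
  obtain ⟨hlam₁, hlam₂⟩ := abs_le.1 hlam
  constructor <;> nlinarith [mul_nonneg hF (mul_nonneg h0 (sub_nonneg.2 hs1))]

lemma abs_Phi_le {H : ℝ → ℝ → ℝ} {A : ℝ} {k : ℕ} (hL : 0 ≤ L) (hF : 0 ≤ F) (hA : 0 ≤ A)
    (hμ : ∀ τ s, (τ, s) ∈ Eset → |mutld lam0 c τ s| ≤ L)
    (hf : ∀ x ∈ Icc (0:ℝ) 1, ∀ y ∈ Icc (0:ℝ) 1, |f x y| ≤ F)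
    (hH : ∀ τ s, (τ, s) ∈ Eset → |H τ s| ≤ A * (τ + s) ^ k) {ξ η : ℝ}
    (hp : (ξ, η) ∈ Eset) :
    |Phi lam0 c f H ξ η| ≤ (F + L) / 2 * A * ((ξ + η) ^ (k + 1) / (k + 1)) := by
  have hμH : ∀ τ s, (τ, s) ∈ Eset → |mutld lam0 c τ s * H τ s| ≤ L * A * (s + τ) ^ k :=
    fun τ s hτs => by
      rw [abs_mul, mul_assoc, add_comm s]
      exact mul_le_mul (hμ τ s hτs) (hH τ s hτs) (abs_nonneg _) hL
  have hfH : ∀ z τ s, (τ, s) ∈ Eset → τ + s ≤ 2 * z → z ≤ τ →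
      |f ((τ - s) / 2) (z - (τ + s) / 2) * H τ s| ≤ F * A * (τ + s) ^ k :=
    fun z τ s hτs hz hzτ => by
      obtain ⟨hx, hy⟩ := kernel_args_mem_Icc hτs hz hzτ
      rw [abs_mul, mul_assoc]
      exact mul_le_mul (hf _ hx _ hy) (hH τ s hτs) (abs_nonneg _) hF
  obtain ⟨h0, h2, h3⟩ := mem_Eset_iff.1 hp
  set W := (ξ + η) ^ (k + 1) / (k + 1)
  have hW : 0 ≤ W := div_nonneg (pow_nonneg (by linarith) _) (by positivity)
  have hLA : 0 ≤ L * A := mul_nonneg hL hA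
  have hFA : 0 ≤ F * A := mul_nonneg hF hA
  have hT₁ := abs_integral_le_of_abs_le_const h2 fun τ hτ =>
    abs_integral_le_of_abs_le_pow h0 (c := τ) (u := ξ + η) (by linarith [hτ.1])
      (by linarith [hτ.2]) hLA fun s hs => hμH τ s (mem_Eset_of_mem_rect hp hτ hs)
  have hT₂ := abs_integral_le_of_abs_le_const h0 fun τ hτ =>
    abs_integral_le_of_abs_le_pow hτ.1 (c := τ) (u := ξ + η) (by linarith [hτ.1])
      (by linarith [hτ.2]) hLA fun s hs => hμH τ s (mem_Eset_of_mem_triangle hp hτ hs)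
  have hT₃ := abs_integral_le_of_abs_le_const h2 fun z hz =>
    abs_integral_le_of_abs_le_const h0 fun s hs =>
      abs_integral_le_of_abs_le_pow (by linarith [hs.2] : z ≤ z + η - s) (c := s)
        (u := ξ + η) (by linarith [hz.1, hs.1]) (by linarith [hz.2]) hFA fun τ hτ =>
          hfH z τ s
            (mem_Eset_iff.2 ⟨hs.1, by linarith [hz.1, hs.2, hτ.1], by linarith [hz.2, hτ.2]⟩)
            (by linarith [hz.1, hτ.2]) hτ.1
  have hT₄ := abs_integral_le_of_abs_le_const h0 fun z hz =>
    (abs_integral_le_of_abs_le_const hz.1 fun s hs =>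
      abs_integral_le_of_abs_le_pow (by linarith [hs.2] : z ≤ 2 * z - s) (c := s)
        (u := ξ + η) (by linarith [hz.1, hs.1]) (by linarith [hz.2]) hFA fun τ hτ =>
          hfH z τ s
            (mem_Eset_iff.2 ⟨hs.1, by linarith [hs.2, hτ.1], by linarith [hz.2, hτ.2]⟩)
            (by linarith [hτ.2]) hτ.1).trans
      (mul_le_mul_of_nonneg_left (by linarith [hz.2]) (mul_nonneg hFA hW) :
        F * A * W * (z - 0) ≤ F * A * W * η)
  have hw := Phi_weights_le hp hL hF (mul_nonneg hA hW)
  rw [Phi, abs_le]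
  obtain ⟨hT₁', hT₁''⟩ := abs_le.1 hT₁
  obtain ⟨hT₂', hT₂''⟩ := abs_le.1 hT₂
  obtain ⟨hT₃', hT₃''⟩ := abs_le.1 hT₃
  obtain ⟨hT₄', hT₄''⟩ := abs_le.1 hT₄
  constructor <;> linarith

lemma abs_iterate_Phi_Gzero_le (hL : |lam0| ≤ L) (hF : 0 ≤ F)
    (hμ : ∀ τ s, (τ, s) ∈ Eset → |mutld lam0 c τ s| ≤ L)
    (hf : ∀ x ∈ Icc (0:ℝ) 1, ∀ y ∈ Icc (0:ℝ) 1, |f x y| ≤ F) (n : ℕ) {τ s : ℝ}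
    (hp : (τ, s) ∈ Eset) :
    |(Phi lam0 c f)^[n] (Gzero lam0 f) τ s|
      ≤ ((F + L) / 2) ^ (n + 1) / n.factorial * (τ + s) ^ n := by
  have hL0 : 0 ≤ L := (abs_nonneg _).trans hL
  induction n generalizing τ s with
  | zero => simpa using abs_Gzero_le lam0 hL hF hf hp
  | succ n ih =>
    rw [Function.iterate_succ_apply']
    refine (abs_Phi_le lam0 hL0 hF (by positivity) hμ hf (fun τ s => ih) hp).trans_eq ?_
    rw [Nat.factorial_succ]
    push_cast
    field_simp
    ring

end Bounds

theorem DeltaG_bound_general (lam0 : ℝ)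
    (c1 : ℝ → ℝ) (hc1 : ContinuousOn c1 (Icc 0 1))
    (f : ℝ → ℝ → ℝ)
    (hf : ContinuousOn (fun p : ℝ × ℝ => f p.1 p.2) (Icc 0 1 ×ˢ Icc 0 1)) :
    ∀ n : ℕ, ∀ xi eta : ℝ, (xi, eta) ∈ Eset →
      |Gseq lam0 c1 f (n + 1) xi eta - Gseq lam0 c1 f n xi eta| ≤
        Mconst lam0 c1 f ^ (n + 2) / (Nat.factorial (n + 1) : ℝ) * (xi + eta) ^ (n + 1) := by
  obtain ⟨c, hc, hcc1⟩ := hc1.exists_continuous_eqOn isClosed_Icc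
  obtain ⟨g, hg, hgf⟩ := hf.exists_continuous_eqOn (isClosed_Icc.prod isClosed_Icc)
  have hfg : ∀ x ∈ Icc (0:ℝ) 1, ∀ y ∈ Icc (0:ℝ) 1, f x y = g (x, y) :=
    fun x hx y hy => (hgf (show (x, y) ∈ Icc 0 1 ×ˢ Icc 0 1 from ⟨hx, hy⟩)).symm
  have hD₀ : ((0:ℝ), (0:ℝ)) ∈ Dset := ⟨le_rfl, le_rfl, zero_le_one⟩
  intro n xi eta hp
  rw [Gseq_congr lam0 hcc1.symm hfg (n + 1) hp, Gseq_congr lam0 hcc1.symm hfg n hp,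
    Gseq_succ_sub lam0 hc (f := fun x y => g (x, y)) hg]
  refine abs_iterate_Phi_Gzero_le lam0 ?_ ?_ (fun τ s hτs => ?_) (fun x hx y hy => ?_) (n + 1) hp
  · -- `Λ̄` dominates `|λ0 - c1 0 + c1 0| = |λ0|`
    simpa using abs_le_Lambdabar lam0 hc1 hD₀
  · exact (abs_nonneg _).trans (abs_le_fbar hf (Dset_subset_Icc_prod_Icc hD₀).1
      (Dset_subset_Icc_prod_Icc hD₀).2)
  · rw [← mutld_congr lam0 hcc1.symm hτs]
    exact abs_le_Lambdabar lam0 hc1 (mem_Dset_of_mem_Eset hτs)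
  · rw [← hfg x hx y hy]
    exact abs_le_fbar hf hx hy

/-- Bound on the successive approximation differences:
`|ΔG_n(ξ,η)| ≤ M^(n+2)/(n+1)! (ξ+η)^(n+1)` on `E` for all `n`. -/
theorem DeltaG_bound (lam0 : ℝ) (hlam0 : 0 < lam0)
    (c1 : ℝ → ℝ) (hc1 : ContinuousOn c1 (Icc 0 1))
    (f : ℝ → ℝ → ℝ)
    (hf : ContinuousOn (fun p : ℝ × ℝ => f p.1 p.2) (Icc 0 1 ×ˢ Icc 0 1)) :
    ∀ n : ℕ, ∀ xi eta : ℝ, (xi, eta) ∈ Eset →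
      |Gseq lam0 c1 f (n + 1) xi eta - Gseq lam0 c1 f n xi eta| ≤
        Mconst lam0 c1 f ^ (n + 2) / (Nat.factorial (n + 1) : ℝ) * (xi + eta) ^ (n + 1) :=
  DeltaG_bound_general lam0 c1 hc1 f hf
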